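/- Let f be a random variable and x_1, …, x_n random variables, all taking values in finite sets on a common probability space. Let K_1, …, K_g ⊆ [n] and E_1^1, …, E_1^g ⊆ [n] be index sets, and let d^1, …, d^g be further random variables (the data downloaded during the eavesdropped repairs in group i). Writing x_S for the tuple (x_i)_{i∈S}, assume: (i) security: I(f; (x_{E_1^1 ∪ … ∪ E_1^g}, d^1, …, d^g)) = 0; and (ii) reconstruction: H(f | x_{K_1 ∪ … ∪ K_g}) = 0. Then H(f) ≤ ∑_{i=1}^{g} H( x_{K_i} | x_{E_1^i}, d^i ). -/

import Mathlib

/-! Finite-probability-space Shannon entropy framework. -/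

/-- `p` is a probability mass function on the finite sample space `Ω`. -/
def IsPMF {Ω : Type} [Fintype Ω] (p : Ω → ℝ) : Prop :=
  (∀ ω, 0 ≤ p ω) ∧ ∑ ω, p ω = 1

/-- Probability that the random variable `X` takes the value `x`. -/
noncomputable def prEq {Ω : Type} [Fintype Ω] (p : Ω → ℝ) {S : Type} [DecidableEq S]
    (X : Ω → S) (x : S) : ℝ :=
  ∑ ω, if X ω = x then p ω else 0

/-- Shannon entropy (base `b`) of the random variable `X` on the finite probability
space `(Ω, p)`.  Terms with probability `0` vanish since `Real.logb b 0 = 0`. -/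
noncomputable def entH {Ω : Type} [Fintype Ω] (b : ℝ) (p : Ω → ℝ) {S : Type}
    [Fintype S] [DecidableEq S] (X : Ω → S) : ℝ :=
  -∑ x, prEq p X x * Real.logb b (prEq p X x)

/-- Conditional entropy `H(X | Y) = H(X, Y) - H(Y)`. -/
noncomputable def condH {Ω : Type} [Fintype Ω] (b : ℝ) (p : Ω → ℝ) {S T : Type}
    [Fintype S] [DecidableEq S] [Fintype T] [DecidableEq T]
    (X : Ω → S) (Y : Ω → T) : ℝ :=
  entH b p (fun ω => (X ω, Y ω)) - entH b p Y

/-- Mutual information `I(X; Y) = H(X) + H(Y) - H(X, Y)`. -/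
noncomputable def mutI {Ω : Type} [Fintype Ω] (b : ℝ) (p : Ω → ℝ) {S T : Type}
    [Fintype S] [DecidableEq S] [Fintype T] [DecidableEq T]
    (X : Ω → S) (Y : Ω → T) : ℝ :=
  entH b p X + entH b p Y - entH b p (fun ω => (X ω, Y ω))

/-- Independence of two random variables on a finite probability space. -/
def IndepRV {Ω : Type} [Fintype Ω] (p : Ω → ℝ) {S T : Type} [DecidableEq S] [DecidableEq T]
    (X : Ω → S) (Y : Ω → T) : Prop :=
  ∀ x y, prEq p (fun ω => (X ω, Y ω)) (x, y) = prEq p X x * prEq p Y y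



/-! Security says the file `f` is independent of the eavesdropper's view `Z`, so
`H(f) = H(f | Z)`; reconstruction gives `H(f | Z) ≤ H(x_K | Z) + H(f | x_K) = H(x_K | Z)`.
Splitting `x_K` into the groups `x_{K_i}` and using subadditivity of conditional entropy, then
conditioning each term only on the part `(x_{E_i}, d^i)` of `Z`, bounds this by the sum.
Every step is an instance of the submodularity of entropy. -/

open Finset Real

section Entropy

variable {Ω : Type} [Fintype Ω] {b : ℝ} {p : Ω → ℝ}
variable {S T : Type} [DecidableEq S] [DecidableEq T]

lemma prEq_nonneg (hp : IsPMF p) (X : Ω → S) (s : S) : 0 ≤ prEq p X s :=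
  sum_nonneg fun ω _ => by split_ifs <;> simp [hp.1 ω]

lemma sum_prEq [Fintype S] (hp : IsPMF p) (X : Ω → S) : ∑ s, prEq p X s = 1 := by
  simp only [prEq]
  rw [sum_comm]
  simpa using hp.2

lemma prEq_le_prEq_comp (hp : IsPMF p) (X : Ω → S) (φ : S → T) (s : S) :
    prEq p X s ≤ prEq p (fun ω => φ (X ω)) (φ s) :=
  sum_le_sum fun ω _ => by split_ifs with h h' <;> simp_all [hp.1 ω]

lemma prEq_comp [Fintype S] (X : Ω → S) (φ : S → T) (t : T) :
    prEq p (fun ω => φ (X ω)) t = ∑ s with φ s = t, prEq p X s := by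
  simp only [prEq]
  rw [sum_comm]
  refine sum_congr rfl fun ω _ => ?_
  rw [sum_ite_eq]
  simp

lemma sum_prEq_pair_fst [Fintype S] (X : Ω → S) (Y : Ω → T) (t : T) :
    ∑ s, prEq p (fun ω => (X ω, Y ω)) (s, t) = prEq p Y t := by
  simp only [prEq]
  rw [sum_comm]
  refine sum_congr rfl fun ω _ => ?_
  simp [Prod.ext_iff, ite_and]

lemma sum_prEq_mul_logb_comp [Fintype S] [Fintype T] (X : Ω → S) (φ : S → T) :
    ∑ s, prEq p X s * logb b (prEq p (fun ω => φ (X ω)) (φ s))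
      = -entH b p (fun ω => φ (X ω)) := by
  rw [entH, neg_neg, ← sum_fiberwise univ φ]
  refine sum_congr rfl fun t _ => ?_
  rw [prEq_comp X φ t, sum_mul]
  refine sum_congr rfl fun s hs => ?_
  rw [(mem_filter.mp hs).2, prEq_comp X φ t]

lemma entH_le_of_factor [Fintype S] [Fintype T] (hb : 1 < b) (hp : IsPMF p)
    {X : Ω → S} {Y : Ω → T} (φ : S → T) (h : ∀ ω, Y ω = φ (X ω)) :
    entH b p Y ≤ entH b p X := by
  obtain rfl : Y = fun ω => φ (X ω) := funext h
  rw [← neg_le_neg_iff, ← sum_prEq_mul_logb_comp X φ, entH, neg_neg]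
  refine sum_le_sum fun s _ => ?_
  rcases (prEq_nonneg hp X s).eq_or_lt with h0 | hpos
  · simp [← h0]
  · exact mul_le_mul_of_nonneg_left
      (logb_le_logb_of_le hb hpos (prEq_le_prEq_comp hp X φ s)) hpos.le

lemma sum_mul_logb_sub_logb_nonpos {A : Type} [Fintype A] (hb : 1 < b) {q r : A → ℝ}
    (hq : ∀ a, 0 ≤ q a) (hr : ∀ a, 0 ≤ r a) (hsupp : ∀ a, q a ≠ 0 → r a ≠ 0)
    (hmass : ∑ a, r a ≤ ∑ a, q a) :
    ∑ a, q a * (logb b (r a) - logb b (q a)) ≤ 0 := by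
  have hlogb : 0 < log b := log_pos hb
  have hterm : ∀ a, q a * (logb b (r a) - logb b (q a)) ≤ (r a - q a) / log b := by
    intro a
    rcases (hq a).eq_or_lt with h0 | hpos
    · simpa [← h0] using div_nonneg (hr a) hlogb.le
    · have hrpos : 0 < r a := (hr a).lt_of_ne (hsupp a hpos.ne').symm
      have hlog : log (r a / q a) ≤ r a / q a - 1 := log_le_sub_one_of_pos (by positivity)
      rw [logb, logb, ← sub_div, ← log_div hrpos.ne' hpos.ne', ← mul_div_assoc]
      gcongr
      calc q a * log (r a / q a) ≤ q a * (r a / q a - 1) := by gcongr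
        _ = r a - q a := by field_simp
  calc ∑ a, q a * (logb b (r a) - logb b (q a)) ≤ ∑ a, (r a - q a) / log b :=
        sum_le_sum fun a _ => hterm a
    _ = (∑ a, r a - ∑ a, q a) / log b := by rw [← sum_div, sum_sub_distrib]
    _ ≤ 0 := div_nonpos_of_nonpos_of_nonneg (by linarith) hlogb.le

end Entropy

section Submodularity

variable {Ω : Type} [Fintype Ω] {b : ℝ} {p : Ω → ℝ}
variable {S T U : Type} [Fintype S] [DecidableEq S] [Fintype T] [DecidableEq T]
  [Fintype U] [DecidableEq U]

lemma sum_prEq_mul_prEq_div_prEq_le_one (hp : IsPMF p) (X : Ω → S) (Y : Ω → T) (Z : Ω → U) :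
    ∑ a : S × T × U, prEq p (fun ω => (X ω, Y ω)) (a.1, a.2.1)
      * prEq p (fun ω => (Y ω, Z ω)) a.2 / prEq p Y a.2.1 ≤ 1 := by
  have hfiber : ∀ c : T × U, ∑ s, prEq p (fun ω => (X ω, Y ω)) (s, c.1)
      * prEq p (fun ω => (Y ω, Z ω)) c / prEq p Y c.1 ≤ prEq p (fun ω => (Y ω, Z ω)) c := by
    intro c
    simp only [mul_div_assoc]
    rw [← sum_mul, sum_prEq_pair_fst]
    rcases eq_or_ne (prEq p Y c.1) 0 with h0 | hne
    · simpa [h0] using prEq_nonneg hp _ c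
    · rw [mul_div_cancel₀ _ hne]
  calc _ = ∑ c : T × U, ∑ s, prEq p (fun ω => (X ω, Y ω)) (s, c.1)
          * prEq p (fun ω => (Y ω, Z ω)) c / prEq p Y c.1 := by
        rw [Fintype.sum_prod_type, sum_comm]
    _ ≤ ∑ c : T × U, prEq p (fun ω => (Y ω, Z ω)) c := sum_le_sum fun c _ => hfiber c
    _ = 1 := sum_prEq hp _

/-- Submodularity of entropy, `I(X; Z | Y) ≥ 0`: Gibbs' inequality for the law of `(X, Y, Z)`
against `P(x, y) P(y, z) / P(y)`. -/
theorem entH_submodular (hb : 1 < b) (hp : IsPMF p) (X : Ω → S) (Y : Ω → T) (Z : Ω → U) :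
    entH b p (fun ω => (X ω, Y ω, Z ω)) + entH b p Y
      ≤ entH b p (fun ω => (X ω, Y ω)) + entH b p (fun ω => (Y ω, Z ω)) := by
  set W : Ω → S × T × U := fun ω => (X ω, Y ω, Z ω)
  set q := prEq p W
  set pXY := prEq p (fun ω => (X ω, Y ω))
  set pYZ := prEq p (fun ω => (Y ω, Z ω))
  set pY := prEq p Y
  set r : S × T × U → ℝ := fun a => pXY (a.1, a.2.1) * pYZ a.2 / pY a.2.1
  have hsupp : ∀ a, q a ≠ 0 → pXY (a.1, a.2.1) ≠ 0 ∧ pYZ a.2 ≠ 0 ∧ pY a.2.1 ≠ 0 := by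
    intro a ha
    have hqa : 0 < q a := (prEq_nonneg hp W a).lt_of_ne' ha
    exact ⟨(hqa.trans_le (prEq_le_prEq_comp hp W (fun c => (c.1, c.2.1)) a)).ne',
      (hqa.trans_le (prEq_le_prEq_comp hp W (fun c => c.2) a)).ne',
      (hqa.trans_le (prEq_le_prEq_comp hp W (fun c => c.2.1) a)).ne'⟩
  have hlogr : ∀ a, q a * logb b (r a) = q a * logb b (pXY (a.1, a.2.1))
      + q a * logb b (pYZ a.2) - q a * logb b (pY a.2.1) := by
    intro a
    rcases eq_or_ne (q a) 0 with h0 | hne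
    · simp [h0]
    · obtain ⟨hXY, hYZ, hY⟩ := hsupp a hne
      simp only [r]
      rw [logb_div (mul_ne_zero hXY hYZ) hY, logb_mul hXY hYZ]
      ring
  have hsum : ∑ a, q a * logb b (r a) = -entH b p (fun ω => (X ω, Y ω))
      - entH b p (fun ω => (Y ω, Z ω)) + entH b p Y := by
    have hXY : ∑ a, q a * logb b (pXY (a.1, a.2.1)) = -entH b p (fun ω => (X ω, Y ω)) :=
      sum_prEq_mul_logb_comp W (fun c => (c.1, c.2.1))
    have hYZ : ∑ a, q a * logb b (pYZ a.2) = -entH b p (fun ω => (Y ω, Z ω)) :=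
      sum_prEq_mul_logb_comp W (fun c => c.2)
    have hY : ∑ a, q a * logb b (pY a.2.1) = -entH b p Y :=
      sum_prEq_mul_logb_comp W (fun c => c.2.1)
    rw [sum_congr rfl fun a _ => hlogr a, sum_sub_distrib, sum_add_distrib, hXY, hYZ, hY]
    ring
  have hgibbs := sum_mul_logb_sub_logb_nonpos (q := q) (r := r) hb (prEq_nonneg hp W)
    (fun a => div_nonneg (mul_nonneg (prEq_nonneg hp _ _) (prEq_nonneg hp _ _))
      (prEq_nonneg hp _ _))
    (fun a ha => by obtain ⟨h₁, h₂, h₃⟩ := hsupp a ha; exact div_ne_zero (mul_ne_zero h₁ h₂) h₃)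
    ((sum_prEq_mul_prEq_div_prEq_le_one hp X Y Z).trans (sum_prEq hp W).ge)
  have hW : entH b p W = -∑ a, q a * logb b (q a) := rfl
  simp only [mul_sub, sum_sub_distrib, hsum] at hgibbs
  linarith

lemma condH_le_of_factor_left (hb : 1 < b) (hp : IsPMF p) {X : Ω → S} {X' : Ω → U}
    (Z : Ω → T) (φ : U → S) (h : ∀ ω, X ω = φ (X' ω)) :
    condH b p X Z ≤ condH b p X' Z := by
  have := entH_le_of_factor hb hp (X := fun ω => (X' ω, Z ω)) (Y := fun ω => (X ω, Z ω))
    (fun c => (φ c.1, c.2)) (fun ω => by rw [h])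
  unfold condH
  linarith

lemma condH_le_of_factor_right (hb : 1 < b) (hp : IsPMF p) (X : Ω → S) {Z : Ω → T}
    {W : Ω → U} (ψ : T → U) (h : ∀ ω, W ω = ψ (Z ω)) :
    condH b p X Z ≤ condH b p X W := by
  have hsub := entH_submodular hb hp X W Z
  have hXZ := entH_le_of_factor hb hp (X := fun ω => (X ω, W ω, Z ω)) (Y := fun ω => (X ω, Z ω))
    (fun c => (c.1, c.2.2)) (fun ω => rfl)
  have hWZ := entH_le_of_factor hb hp (X := Z) (Y := fun ω => (W ω, Z ω))
    (fun z => (ψ z, z)) (fun ω => by rw [h])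
  unfold condH
  linarith

lemma condH_pair_le_add (hb : 1 < b) (hp : IsPMF p) (X : Ω → S) (Y : Ω → T) (Z : Ω → U) :
    condH b p (fun ω => (X ω, Y ω)) Z ≤ condH b p X Z + condH b p Y Z := by
  have hsub := entH_submodular hb hp X Z Y
  have hXYZ := entH_le_of_factor hb hp (X := fun ω => (X ω, Z ω, Y ω))
    (Y := fun ω => ((X ω, Y ω), Z ω)) (fun c => ((c.1, c.2.2), c.2.1)) (fun ω => rfl)
  have hZY := entH_le_of_factor hb hp (X := fun ω => (Y ω, Z ω)) (Y := fun ω => (Z ω, Y ω))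
    Prod.swap (fun ω => rfl)
  unfold condH
  linarith

lemma condH_le_condH_add_condH (hb : 1 < b) (hp : IsPMF p) (X : Ω → S) (Y : Ω → T)
    (Z : Ω → U) : condH b p X Z ≤ condH b p Y Z + condH b p X Y := by
  have hsub := entH_submodular hb hp X Y Z
  have hXZ := entH_le_of_factor hb hp (X := fun ω => (X ω, Y ω, Z ω)) (Y := fun ω => (X ω, Z ω))
    (fun c => (c.1, c.2.2)) (fun ω => rfl)
  unfold condH
  linarith

lemma condH_pi_le_sum (hb : 1 < b) (hp : IsPMF p) {ι : Type} [DecidableEq ι]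
    {St : ι → Type} [∀ i, Fintype (St i)] [∀ i, DecidableEq (St i)]
    (Y : ∀ i, Ω → St i) (Z : Ω → U) (A : Finset ι) :
    condH b p (fun ω (i : A) => Y i ω) Z ≤ ∑ i ∈ A, condH b p (Y i) Z := by
  induction A using Finset.induction_on with
  | empty =>
    have := entH_le_of_factor hb hp (X := Z)
      (Y := fun ω => (fun (i : (∅ : Finset ι)) => Y i ω, Z ω))
      (fun z => (isEmptyElim, z)) fun ω => Prod.ext (Subsingleton.elim _ _) rfl
    rw [sum_empty, condH]
    linarith
  | @insert a A ha ih =>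
    calc condH b p (fun ω (i : ↥(insert a A)) => Y i ω) Z
        ≤ condH b p (fun ω => (Y a ω, fun i : A => Y i ω)) Z := by
          refine condH_le_of_factor_left hb hp Z
            (fun c (i : ↥(insert a A)) =>
              if h : (i : ι) = a then cast (congrArg St h.symm) c.1
              else c.2 ⟨i, mem_of_mem_insert_of_ne i.2 h⟩)
            fun ω => funext fun i => ?_
          split_ifs with h
          · obtain ⟨i, hi⟩ := i
            dsimp only at h
            subst h
            rfl
          · rfl
      _ ≤ condH b p (Y a) Z + condH b p (fun ω (i : A) => Y i ω) Z := condH_pair_le_add hb hp _ _ _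
      _ ≤ ∑ i ∈ insert a A, condH b p (Y i) Z := by
          rw [sum_insert ha]
          gcongr

end Submodularity

/-- **Group-wise upper bound on the secure file size of a locally repairable DSS**
(Lemma 7 of Rawat–Koyluoglu–Silberstein–Vishwanath).  `K i` indexes the nodes the data
collector contacts in the `i`-th local group, `E i` the storage-eavesdropped nodes of
that group, and `d i` the downloads observed in that group.  If the eavesdropper learns
nothing (`I(f; (x_{∪E_i}, d^1, …, d^g)) = 0`) and the data collector can reconstruct
(`H(f | x_{∪K_i}) = 0`), then `H(f) ≤ ∑ i, H(x_{K_i} | x_{E_i}, d^i)`. -/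
theorem lrc_secrecy_groupwise_bound
    {Ω : Type} [Fintype Ω] (b : ℝ) (hb : 1 < b) (p : Ω → ℝ) (hp : IsPMF p)
    (n g : ℕ)
    {F : Type} [Fintype F] [DecidableEq F] (f : Ω → F)
    {X : Fin n → Type} [∀ i, Fintype (X i)] [∀ i, DecidableEq (X i)] (x : ∀ i, Ω → X i)
    (K E : Fin g → Finset (Fin n))
    {D : Fin g → Type} [∀ i, Fintype (D i)] [∀ i, DecidableEq (D i)] (d : ∀ i, Ω → D i)
    -- (i) security: the eavesdropper's observations are independent of the file
    (hsec : mutI b p f (fun ω =>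
      ((fun i : ↥(Finset.univ.biUnion E) => x i ω), (fun i : Fin g => d i ω))) = 0)
    -- (ii) reconstruction from the contacted nodes
    (hrec : condH b p f (fun ω => fun i : ↥(Finset.univ.biUnion K) => x i ω) = 0) :
    entH b p f ≤ ∑ i : Fin g,
      condH b p (fun ω => fun j : ↥(K i) => x j ω)
        (fun ω => ((fun j : ↥(E i) => x j ω), d i ω)) := by
  set Z := fun ω => ((fun i : ↥(univ.biUnion E) => x i ω), (fun i : Fin g => d i ω))
  set xK := fun ω => fun i : ↥(univ.biUnion K) => x i ω
  have hcond : entH b p f = condH b p f Z := by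
    unfold mutI at hsec
    unfold condH
    linarith
  calc entH b p f = condH b p f Z := hcond
    _ ≤ condH b p xK Z + condH b p f xK := condH_le_condH_add_condH hb hp f xK Z
    _ = condH b p xK Z := by rw [hrec, add_zero]
    _ ≤ condH b p (fun ω (i : (univ : Finset (Fin g))) (j : K i) => x j ω) Z :=
        condH_le_of_factor_left hb hp Z
          (fun c j => c ⟨_, mem_univ _⟩ ⟨j, (mem_biUnion.mp j.2).choose_spec.2⟩) fun ω => rfl
    _ ≤ ∑ i, condH b p (fun ω (j : K i) => x j ω) Z :=
        condH_pi_le_sum hb hp (fun i ω (j : K i) => x j ω) Z univ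
    _ ≤ _ := sum_le_sum fun i _ => condH_le_of_factor_right hb hp _
        (fun c => (fun j : E i => c.1 ⟨j, mem_biUnion.mpr ⟨i, mem_univ i, j.2⟩⟩, c.2 i))
        fun ω => rfl
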